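/- If u = φ₃(1/√2), then √u + √(u') = 2^{1/4}, where u' = √(1−u²). -/

import Mathlib

set_option maxHeartbeats 4000000
set_option maxRecDepth 100000
set_option linter.unnecessarySeqFocus false

open Real Set intervalIntegral

noncomputable def ellK (r : ℝ) : ℝ :=
  ∫ θ in (0:ℝ)..(Real.pi/2), 1 / Real.sqrt (1 - r^2 * Real.sin θ ^ 2)

noncomputable def mu (r : ℝ) : ℝ :=
  (Real.pi/2) * ellK (Real.sqrt (1 - r^2)) / ellK r

noncomputable def muInv (y : ℝ) : ℝ := Function.invFunOn mu (Set.Ioo 0 1) y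

noncomputable def phi (K r : ℝ) : ℝ :=
  if r = 0 then 0 else if r = 1 then 1 else muInv (mu r / K)

lemma integrand_pos {r : ℝ} (hr : r^2 < 1) (θ : ℝ) : 0 < 1 - r^2 * Real.sin θ ^ 2 := by
  nlinarith [Real.sin_sq_le_one θ, sq_nonneg (r * Real.sin θ), sq_nonneg (Real.sin θ)]

lemma integrand_cont {r : ℝ} (hr : r^2 < 1) :
    Continuous (fun θ : ℝ => 1 / Real.sqrt (1 - r^2 * Real.sin θ ^ 2)) := by
  apply Continuous.div continuous_const
  · exact ((continuous_const.sub ((continuous_const.mul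
      ((Real.continuous_sin).pow 2))))).sqrt
  · intro θ
    exact (Real.sqrt_pos.2 (integrand_pos hr θ)).ne'

lemma ellK_pos {r : ℝ} (hr : r^2 < 1) : 0 < ellK r := by
  apply intervalIntegral_pos_of_pos ((integrand_cont hr).intervalIntegrable _ _)
  · intro θ
    exact one_div_pos.2 (Real.sqrt_pos.2 (integrand_pos hr θ))
  · positivity

lemma ellK_lt {r₁ r₂ : ℝ} (h0 : 0 ≤ r₁) (h12 : r₁ < r₂) (h2 : r₂ < 1) :
    ellK r₁ < ellK r₂ := by
  have hr1 : r₁^2 < 1 := by nlinarith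
  have hr2 : r₂^2 < 1 := by nlinarith
  apply integral_lt_integral_of_continuousOn_of_le_of_exists_lt (by positivity)
    (integrand_cont hr1).continuousOn (integrand_cont hr2).continuousOn
  · intro θ _
    apply one_div_le_one_div_of_le (Real.sqrt_pos.2 (integrand_pos hr2 θ))
    apply Real.sqrt_le_sqrt
    nlinarith [mul_nonneg (mul_nonneg (sub_nonneg.2 h12.le) (by linarith : (0:ℝ) ≤ r₁ + r₂))
      (sq_nonneg (Real.sin θ))]
  · refine ⟨Real.pi/2, ⟨by positivity, le_refl _⟩, ?_⟩
    apply one_div_lt_one_div_of_lt (Real.sqrt_pos.2 (integrand_pos hr2 _))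
    apply Real.sqrt_lt_sqrt (integrand_pos hr2 _).le
    rw [Real.sin_pi_div_two]
    nlinarith

theorem ellK_transform (k lam a b c : ℝ)
    (hk0 : 0 ≤ k) (hk1 : k < 1) (hl0 : 0 ≤ lam) (hl1 : lam < 1)
    (ha1 : 1 ≤ a) (hb : 0 ≤ b) (hc : 0 ≤ c) (hab : a + b = 1 + c)
    (hQ1 : 0 < 2 - a + b) (hQ2 : 1 + 2*b ≤ a)
    (hW1 : 0 < a + 3*b - a*c + b*c) (hW2 : 3*b + 2*(b*c) ≤ a*c)
    (hid : ∀ x : ℝ, (a + (3*b - a*c)*x^2 + b*c*x^4)^2 * ((1-x^2)*(1-k^2*x^2))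
        = a^2 * (((1+c*x^2)^2 - (x*(a+b*x^2))^2) * ((1+c*x^2)^2 - lam^2*(x*(a+b*x^2))^2))) :
    ellK lam = a * ellK k := by
  have hk2 : k^2 < 1 := by nlinarith
  have hl2 : lam^2 < 1 := by nlinarith
  have ha0 : (0:ℝ) < a := by linarith
  set g : ℝ → ℝ := fun x => x*(a+b*x^2)/(1+c*x^2) with hg_def
  have hD : ∀ x : ℝ, 0 < 1 + c*x^2 := fun x => by positivity
  -- bounds for g
  have hg0 : ∀ x : ℝ, 0 ≤ x → 0 ≤ g x := by
    intro x hx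
    apply div_nonneg _ (hD x).le
    have : 0 ≤ a + b*x^2 := by positivity
    positivity
  have hgle : ∀ x : ℝ, 0 ≤ x → x ≤ 1 → g x ≤ 1 := by
    intro x hx hx1
    rw [hg_def, div_le_one (hD x)]
    nlinarith [mul_nonneg (mul_nonneg (sub_nonneg.2 hx1) (sub_nonneg.2 hx1))
      (by nlinarith : (0:ℝ) ≤ a - 1 - b*x - b),
      mul_nonneg (sub_nonneg.2 hx1) hQ1.le]
  have hglt : ∀ x : ℝ, 0 ≤ x → x < 1 → g x < 1 := by
    intro x hx hx1
    rw [hg_def, div_lt_one (hD x)]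
    nlinarith [mul_nonneg (mul_nonneg (sub_nonneg.2 hx1.le) (sub_nonneg.2 hx1.le))
      (by nlinarith : (0:ℝ) ≤ a - 1 - b*x - b),
      mul_pos (sub_pos.2 hx1) hQ1]
  have hW : ∀ x : ℝ, 0 ≤ x → x ≤ 1 → 0 < a + (3*b - a*c)*x^2 + b*c*x^4 := by
    intro x hx hx1
    nlinarith [mul_nonneg (sub_nonneg.2 (by nlinarith : x^2 ≤ 1))
      (by nlinarith [mul_nonneg (mul_nonneg hb hc) (sub_nonneg.2 (by nlinarith : x^2 ≤ 1))] :
        (0:ℝ) ≤ a*c - 3*b - b*c - b*c*x^2)]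
  -- the two integrands
  set fl : ℝ → ℝ := fun θ => 1 / Real.sqrt (1 - lam^2 * Real.sin θ ^ 2) with hfl_def
  set fk : ℝ → ℝ := fun θ => 1 / Real.sqrt (1 - k^2 * Real.sin θ ^ 2) with hfk_def
  have hflc : Continuous fl := integrand_cont hl2
  have hfkc : Continuous fk := integrand_cont hk2
  set G : ℝ → ℝ := fun y => ∫ θ in (0:ℝ)..y, fl θ with hG_def
  set H : ℝ → ℝ := fun y => ∫ θ in (0:ℝ)..y, fk θ with hH_def
  have hG : ∀ y : ℝ, HasDerivAt G (fl y) y := by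
    intro y
    exact intervalIntegral.integral_hasDerivAt_right (hflc.intervalIntegrable _ _)
      (hflc.stronglyMeasurableAtFilter _ _) hflc.continuousAt
  have hH : ∀ y : ℝ, HasDerivAt H (fk y) y := by
    intro y
    exact intervalIntegral.integral_hasDerivAt_right (hfkc.intervalIntegrable _ _)
      (hfkc.stronglyMeasurableAtFilter _ _) hfkc.continuousAt
  set ψ : ℝ → ℝ := fun θ => Real.arcsin (g (Real.sin θ)) with hψ_def
  set F : ℝ → ℝ := fun θ => G (ψ θ) - a * H θ with hF_def
  have hgc : Continuous g := by
    apply Continuous.div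
    · exact continuous_id.mul (continuous_const.add (continuous_const.mul (continuous_pow 2)))
    · exact continuous_const.add (continuous_const.mul (continuous_pow 2))
    · intro x; exact (hD x).ne'
  have hFc : Continuous F := by
    have hGc : Continuous G := by
      have : Differentiable ℝ G := fun y => (hG y).differentiableAt
      exact this.continuous
    have hHc : Continuous H := by
      have : Differentiable ℝ H := fun y => (hH y).differentiableAt
      exact this.continuous
    exact (hGc.comp (Real.continuous_arcsin.comp (hgc.comp Real.continuous_sin))).sub
      (continuous_const.mul hHc)
  have key : ∀ θ ∈ Ico (0:ℝ) (Real.pi/2), HasDerivWithinAt F 0 (Ici θ) θ := by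
    intro θ hθ
    have hθ0 := hθ.1
    have hθπ := hθ.2
    set x : ℝ := Real.sin θ with hx_def
    have hx0 : 0 ≤ x := Real.sin_nonneg_of_nonneg_of_le_pi hθ0
      (by linarith [Real.pi_pos] : θ ≤ Real.pi)
    have hx1 : x < 1 := by
      have := Real.strictMonoOn_sin (a := θ) (b := Real.pi/2)
        ⟨by linarith [Real.pi_pos], hθπ.le⟩ ⟨by linarith [Real.pi_pos], le_refl _⟩ hθπ
      simpa [Real.sin_pi_div_two] using this
    have hgx0 : 0 ≤ g x := hg0 x hx0
    have hgx1 : g x < 1 := hglt x hx0 hx1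
    -- derivative of g at x
    have hnum : HasDerivAt (fun y : ℝ => y*(a+b*y^2)) (a + 3*b*x^2) x := by
      have h1 := ((hasDerivAt_pow 3 x).const_mul b).add ((hasDerivAt_id x).const_mul a)
      have h2 : (fun y : ℝ => y*(a+b*y^2)) = (fun y : ℝ => b*y^3 + a*y) := by
        funext y; ring
      rw [h2]
      exact h1.congr_deriv (by push_cast; ring)
    have hden : HasDerivAt (fun y : ℝ => 1 + c*y^2) (2*c*x) x := by
      have h1 := (hasDerivAt_const x 1).add ((hasDerivAt_pow 2 x).const_mul c)
      exact h1.congr_deriv (by push_cast; ring)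
    set Wx : ℝ := a + (3*b - a*c)*x^2 + b*c*x^4 with hWx_def
    have hWxpos : 0 < Wx := hW x hx0 hx1.le
    have hgd : HasDerivAt g (Wx / (1+c*x^2)^2) x := by
      have := hnum.div hden (hD x).ne'
      refine this.congr_deriv ?_
      rw [hWx_def]
      field_simp
      ring
    have harc : HasDerivAt Real.arcsin (1 / Real.sqrt (1 - (g x)^2)) (g x) :=
      Real.hasDerivAt_arcsin (by linarith : g x ≠ -1) (ne_of_lt hgx1)
    have hsin : HasDerivAt Real.sin (Real.cos θ) θ := Real.hasDerivAt_sin θ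
    have hgsin : HasDerivAt (fun u => g (Real.sin u)) (Wx / (1+c*x^2)^2 * Real.cos θ) θ :=
      by have := hgd.comp θ hsin; exact this
    have hψd : HasDerivAt ψ (1 / Real.sqrt (1 - (g x)^2) * (Wx / (1+c*x^2)^2 * Real.cos θ)) θ :=
      by have := harc.comp θ hgsin; exact this
    have hGψ : HasDerivAt (fun u => G (ψ u))
        (fl (ψ θ) * (1 / Real.sqrt (1 - (g x)^2) * (Wx / (1+c*x^2)^2 * Real.cos θ))) θ :=
      (hG (ψ θ)).comp θ hψd
    have hFd : HasDerivAt F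
        (fl (ψ θ) * (1 / Real.sqrt (1 - (g x)^2) * (Wx / (1+c*x^2)^2 * Real.cos θ))
          - a * fk θ) θ := hGψ.sub ((hH θ).const_mul a)
    -- now show the derivative is zero
    have hEzero : fl (ψ θ) * (1 / Real.sqrt (1 - (g x)^2) * (Wx / (1+c*x^2)^2 * Real.cos θ))
        - a * fk θ = 0 := by
      have hsinψ : Real.sin (ψ θ) = g x := Real.sin_arcsin (by linarith) hgx1.le
      have hcosθ : Real.cos θ = Real.sqrt (1 - x^2) := by
        rw [show (1:ℝ) - x^2 = Real.cos θ^2 by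
          have := Real.sin_sq_add_cos_sq θ; rw [hx_def]; linarith]
        exact (Real.sqrt_sq (Real.cos_nonneg_of_mem_Icc
          ⟨by linarith [Real.pi_pos], by linarith⟩)).symm
      set D : ℝ := 1 + c*x^2 with hDx_def
      set N : ℝ := x*(a+b*x^2) with hN_def
      have hDpos : 0 < D := hD x
      have hN0 : 0 ≤ N := by
        have : 0 ≤ a + b*x^2 := by positivity
        rw [hN_def]; positivity
      have hNltD : N < D := by
        have := hglt x hx0 hx1
        rw [hg_def, div_lt_one hDpos] at this
        exact this
      have hP2 : 0 < D^2 - N^2 := by nlinarith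
      have hP3 : 0 < D^2 - lam^2*N^2 := by nlinarith [sq_nonneg (lam*N), sq_nonneg N]
      have hgxval : g x = N / D := rfl
      clear_value D N
      have h1g2 : 1 - (g x)^2 = (D^2 - N^2)/D^2 := by
        rw [hgxval]; field_simp
      have h1lg2 : 1 - lam^2*(g x)^2 = (D^2 - lam^2*N^2)/D^2 := by
        rw [hgxval]; field_simp
      have hx2le : x^2 < 1 := by nlinarith
      have hkx : 0 < 1 - k^2*x^2 := by nlinarith [sq_nonneg (k*x)]
      have hsU : 0 < Real.sqrt (1 - x^2) := Real.sqrt_pos.2 (by linarith)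
      have hsV : 0 < Real.sqrt (1 - k^2*x^2) := Real.sqrt_pos.2 hkx
      have hsP2 : 0 < Real.sqrt (D^2 - N^2) := Real.sqrt_pos.2 hP2
      have hsP3 : 0 < Real.sqrt (D^2 - lam^2*N^2) := Real.sqrt_pos.2 hP3
      -- the key sqrt identity from hid
      have hkey : Wx * (Real.sqrt (1-x^2) * Real.sqrt (1-k^2*x^2))
          = a * (Real.sqrt (D^2 - N^2) * Real.sqrt (D^2 - lam^2*N^2)) := by
        have e1 : Wx * (Real.sqrt (1-x^2) * Real.sqrt (1-k^2*x^2))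
            = Real.sqrt (Wx^2 * ((1-x^2)*(1-k^2*x^2))) := by
          rw [Real.sqrt_mul (sq_nonneg Wx), Real.sqrt_sq hWxpos.le,
            Real.sqrt_mul (by linarith : (0:ℝ) ≤ 1-x^2)]
        have e2 : a * (Real.sqrt (D^2 - N^2) * Real.sqrt (D^2 - lam^2*N^2))
            = Real.sqrt (a^2 * ((D^2 - N^2)*(D^2 - lam^2*N^2))) := by
          rw [Real.sqrt_mul (sq_nonneg a), Real.sqrt_sq ha0.le,
            Real.sqrt_mul hP2.le]
        rw [e1, e2]
        congr 1
        have := hid x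
        rw [hWx_def, hDx_def, hN_def]
        convert this using 2
      -- expand fl (ψ θ) and fk θ
      have hflψ : fl (ψ θ) = 1 / Real.sqrt (1 - lam^2*(g x)^2) := by
        rw [hfl_def]
        simp only [hsinψ]
      have hfkθ : fk θ = 1 / Real.sqrt (1 - k^2*x^2) := by
        rw [hfk_def, hx_def]
      rw [hflψ, hfkθ, hcosθ, h1g2, h1lg2,
        Real.sqrt_div hP2.le, Real.sqrt_div hP3.le, Real.sqrt_sq hDpos.le]
      rw [sub_eq_zero]
      have e3 : (1:ℝ) / (Real.sqrt (D^2 - lam^2*N^2) / D)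
            * (1 / (Real.sqrt (D^2 - N^2) / D) * (Wx / D^2 * Real.sqrt (1-x^2)))
          = (Wx * Real.sqrt (1-x^2)) / (Real.sqrt (D^2-N^2) * Real.sqrt (D^2-lam^2*N^2)) := by
        rw [one_div_div, one_div_div]
        field_simp
      rw [e3, mul_one_div, div_eq_div_iff (by positivity) hsV.ne']
      linear_combination hkey
    rw [show (0:ℝ) = fl (ψ θ) * (1 / Real.sqrt (1 - (g x)^2) * (Wx / (1+c*x^2)^2 * Real.cos θ))
          - a * fk θ from hEzero.symm]
    exact hFd.hasDerivWithinAt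
  have hconst := constant_of_has_deriv_right_zero hFc.continuousOn key
    (Real.pi/2) ⟨by positivity, le_refl _⟩
  have hF0 : F 0 = 0 := by
    have hg00 : g 0 = 0 := by simp [hg_def]
    simp [hF_def, hψ_def, hG_def, hH_def, Real.sin_zero, hg00, Real.arcsin_zero]
  have hFπ : F (Real.pi/2) = ellK lam - a * ellK k := by
    have hg1 : g 1 = 1 := by
      rw [hg_def]
      show 1*(a+b*1^2)/(1+c*1^2) = 1
      rw [div_eq_one_iff_eq (hD 1).ne']
      linarith
    simp only [hF_def, hψ_def, Real.sin_pi_div_two, hg1, Real.arcsin_one]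
    rfl
  rw [hconst] at hFπ
  rw [hF0] at hFπ
  linarith

section Instances

variable {s t : ℝ}

lemma bounds_pack (hs0 : 0 < s) (ht0 : 0 < t) (hs2 : s^2 = 2) (ht4 : t^4 = 3) :
    (1.4142135 < s ∧ s < 1.4142136) ∧ (1.316074 < t ∧ t < 1.3160741) ∧
    (1.7320508 < t^2 ∧ t^2 < 1.7320509) ∧ (2.279507 < t^3 ∧ t^3 < 2.2795072) ∧
    (1.8612097 < s*t ∧ s*t < 1.8612098) ∧ (2.4494897 < s*t^2 ∧ s*t^2 < 2.4494898) ∧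
    (3.2237097 < s*t^3 ∧ s*t^3 < 3.2237099) := by
  have ht2sq : (t^2)^2 = 3 := by linear_combination ht4
  have ht2pos : 0 < t^2 := by positivity
  have ht2l : (1.7320508:ℝ) < t^2 := by nlinarith [ht2sq, ht2pos]
  have ht2u : t^2 < (1.7320509:ℝ) := by nlinarith [ht2sq, ht2pos, sq_nonneg (t^2 - 1.7320509)]
  have hsl : (1.4142135:ℝ) < s := by nlinarith [hs2, hs0]
  have hsu : s < (1.4142136:ℝ) := by nlinarith [hs2, hs0, sq_nonneg (s - 1.4142136)]
  have htl : (1.316074:ℝ) < t := by nlinarith [ht2l, ht0]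
  have htu : t < (1.3160741:ℝ) := by nlinarith [ht2u, ht0, sq_nonneg (t - 1.3160741)]
  have ht3sq : (t^3)^2 = 3*t^2 := by linear_combination t^2 * ht4
  have ht3pos : 0 < t^3 := by positivity
  have ht3l : (2.279507:ℝ) < t^3 := by nlinarith [ht3sq, ht3pos, ht2l]
  have ht3u : t^3 < (2.2795072:ℝ) := by
    nlinarith [ht3sq, ht3pos, ht2u, sq_nonneg (t^3 - 2.2795072)]
  have hstsq : (s*t)^2 = 2*t^2 := by linear_combination t^2 * hs2
  have hstpos : 0 < s*t := by positivity
  have hstl : (1.8612097:ℝ) < s*t := by nlinarith [hstsq, hstpos, ht2l]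
  have hstu : s*t < (1.8612098:ℝ) := by
    nlinarith [hstsq, hstpos, ht2u, sq_nonneg (s*t - 1.8612098)]
  have hst2sq : (s*t^2)^2 = 6 := by linear_combination t^4 * hs2 + 2 * ht4
  have hst2pos : 0 < s*t^2 := by positivity
  have hst2l : (2.4494897:ℝ) < s*t^2 := by nlinarith [hst2sq, hst2pos]
  have hst2u : s*t^2 < (2.4494898:ℝ) := by
    nlinarith [hst2sq, hst2pos, sq_nonneg (s*t^2 - 2.4494898)]
  have hst3sq : (s*t^3)^2 = 6*t^2 := by linear_combination t^6 * hs2 + 2*t^2 * ht4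
  have hst3pos : 0 < s*t^3 := by positivity
  have hst3l : (3.2237097:ℝ) < s*t^3 := by nlinarith [hst3sq, hst3pos, ht2l]
  have hst3u : s*t^3 < (3.2237099:ℝ) := by
    nlinarith [hst3sq, hst3pos, ht2u, sq_nonneg (s*t^3 - 3.2237099)]
  exact ⟨⟨hsl, hsu⟩, ⟨htl, htu⟩, ⟨ht2l, ht2u⟩, ⟨ht3l, ht3u⟩, ⟨hstl, hstu⟩,
    ⟨hst2l, hst2u⟩, ⟨hst3l, hst3u⟩⟩

lemma transf_one (hs0 : 0 < s) (ht0 : 0 < t) (hs2 : s^2 = 2) (ht4 : t^4 = 3) :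
    ellK ((t^2-1)*(s+t)/2) = (s*t*(1+t^2)/2) * ellK (1/s) := by
  obtain ⟨⟨hsl,hsu⟩,⟨htl,htu⟩,⟨ht2l,ht2u⟩,⟨ht3l,ht3u⟩,⟨hstl,hstu⟩,⟨hst2l,hst2u⟩,⟨hst3l,hst3u⟩⟩ :=
    bounds_pack hs0 ht0 hs2 ht4
  have hks : ((1:ℝ)/s)^2 = 1/2 := by rw [div_pow, one_pow, hs2]
  apply ellK_transform (1/s) ((t^2-1)*(s+t)/2) (s*t*(1+t^2)/2)
      (1 + (s*t + 2*t^2 + s*t^3)/4 - s*t*(1+t^2)/2) ((s*t + 2*t^2 + s*t^3)/4)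
  · positivity
  · rw [div_lt_one hs0]; linarith
  · linarith
  · -- lam < 1
    linarith
  · -- 1 ≤ a
    linarith
  · -- 0 ≤ b
    linarith
  · -- 0 ≤ c
    linarith
  · ring
  · -- 0 < 2 - a + b
    linarith
  · -- 1 + 2b ≤ a
    linarith
  · -- 0 < W(1)
    have e : s*t*(1+t^2)/2 + 3*(1 + (s*t + 2*t^2 + s*t^3)/4 - s*t*(1+t^2)/2)
        - (s*t*(1+t^2)/2)*((s*t + 2*t^2 + s*t^3)/4)
        + (1 + (s*t + 2*t^2 + s*t^3)/4 - s*t*(1+t^2)/2)*((s*t + 2*t^2 + s*t^3)/4)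
        = ((3/2:ℝ) + (1/2:ℝ)*t^2 + (-3/4:ℝ)*s*t + (-1/4:ℝ)*s*t^3) := by
      linear_combination (((-9/8:ℝ) + (-3/4:ℝ)*t^2)) * hs2 + (((1/4:ℝ) + (-1/4:ℝ)*s*t + (-3/8:ℝ)*s^2 + (-3/16:ℝ)*s^2*t^2)) * ht4
    linarith [e]
  · -- 3b + 2bc ≤ ac
    have e : (s*t*(1+t^2)/2)*((s*t + 2*t^2 + s*t^3)/4)
        - (3*(1 + (s*t + 2*t^2 + s*t^3)/4 - s*t*(1+t^2)/2)
          + 2*((1 + (s*t + 2*t^2 + s*t^3)/4 - s*t*(1+t^2)/2)*((s*t + 2*t^2 + s*t^3)/4)))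
        = ((-3/2:ℝ) + (-1/2:ℝ)*t^2 + (1:ℝ)*s*t + (1/2:ℝ)*s*t^3) := by
      linear_combination (((3/2:ℝ) + (1:ℝ)*t^2)) * hs2 + (((-1/2:ℝ) + (1/4:ℝ)*s*t + (1/2:ℝ)*s^2 + (1/4:ℝ)*s^2*t^2)) * ht4
    linarith [e]
  · intro x
    linear_combination (((-1/4:ℝ)*x^2*s^2*t^2 + (-1/2:ℝ)*x^2*s^2*t^4 + (-1/4:ℝ)*x^2*s^2*t^6 + (-3:ℝ)*x^4*s*t + (-9/2:ℝ)*x^4*s*t^3 + (-3/2:ℝ)*x^4*s*t^5 + (1:ℝ)*x^4*s^2*t^2 + (9/4:ℝ)*x^4*s^2*t^4 + (3/2:ℝ)*x^4*s^2*t^6 + (1/4:ℝ)*x^4*s^2*t^8 + (1/8:ℝ)*x^4*s^3*t^3 + (3/8:ℝ)*x^4*s^3*t^5 + (3/8:ℝ)*x^4*s^3*t^7 + (1/8:ℝ)*x^4*s^3*t^9 + (-9:ℝ)*x^6 + (-9:ℝ)*x^6*t^2 + (-9/4:ℝ)*x^6*t^4 + (15/2:ℝ)*x^6*s*t + (49/4:ℝ)*x^6*s*t^3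 + (21/4:ℝ)*x^6*s*t^5 + (1/2:ℝ)*x^6*s*t^7 + (-13/16:ℝ)*x^6*s^2*t^2 + (-15/8:ℝ)*x^6*s^2*t^4 + (-11/8:ℝ)*x^6*s^2*t^6 + (-3/8:ℝ)*x^6*s^2*t^8 + (-1/16:ℝ)*x^6*s^2*t^10 + (-1/4:ℝ)*x^6*s^3*t^3 + (-13/16:ℝ)*x^6*s^3*t^5 + (-15/16:ℝ)*x^6*s^3*t^7 + (-7/16:ℝ)*x^6*s^3*t^9 + (-1/16:ℝ)*x^6*s^3*t^11 + (-1/64:ℝ)*x^6*s^4*t^4 + (-1/16:ℝ)*x^6*s^4*t^6 + (-3/32:ℝ)*x^6*s^4*t^8 + (-1/16:ℝ)*x^6*s^4*t^10 + (-1/64:ℝ)*x^6*s^4*t^12 + (9:ℝ)*x^8 + (6:ℝ)*x^8*t^2 + (-3/4:ℝ)*x^8*t^4 + (-3/4:ℝ)*x^8*t^6 + (-6:ℝ)*x^8*s*t + (-37/4:ℝ)*x^8*s*t^3 + (-25/8:ℝ)*x^8*s*t^5 + (1/4:ℝ)*x^8*s*t^7 + (1/8:ℝ)*x^8*s*t^9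 + (13/16:ℝ)*x^8*s^2*t^2 + (33/16:ℝ)*x^8*s^2*t^4 + (29/16:ℝ)*x^8*s^2*t^6 + (11/16:ℝ)*x^8*s^2*t^8 + (1/8:ℝ)*x^8*s^2*t^10 + (3/32:ℝ)*x^8*s^3*t^3 + (5/16:ℝ)*x^8*s^3*t^5 + (3/8:ℝ)*x^8*s^3*t^7 + (3/16:ℝ)*x^8*s^3*t^9 + (1/32:ℝ)*x^8*s^3*t^11 + (3:ℝ)*x^10*t^2 + (11/4:ℝ)*x^10*t^4 + (1/2:ℝ)*x^10*t^6 + (-1/16:ℝ)*x^10*t^8 + (3/2:ℝ)*x^10*s*t + (5/4:ℝ)*x^10*s*t^3 + (-1:ℝ)*x^10*s*t^5 + (-7/8:ℝ)*x^10*s*t^7 + (-1/8:ℝ)*x^10*s*t^9 + (-13/16:ℝ)*x^10*s^2*t^2 + (-2:ℝ)*x^10*s^2*t^4 + (-51/32:ℝ)*x^10*s^2*t^6 + (-7/16:ℝ)*x^10*s^2*t^8 + (-1/32:ℝ)*x^10*s^2*t^10 + (1/16:ℝ)*x^10*s^3*t^3 + (7/32:ℝ)*x^10*s^3*t^5 +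 (9/32:ℝ)*x^10*s^3*t^7 + (5/32:ℝ)*x^10*s^3*t^9 + (1/32:ℝ)*x^10*s^3*t^11 + (3/256:ℝ)*x^10*s^4*t^4 + (3/64:ℝ)*x^10*s^4*t^6 + (9/128:ℝ)*x^10*s^4*t^8 + (3/64:ℝ)*x^10*s^4*t^10 + (3/256:ℝ)*x^10*s^4*t^12 + (1/4:ℝ)*x^12*t^4 + (1/4:ℝ)*x^12*t^6 + (1/16:ℝ)*x^12*t^8 + (1/4:ℝ)*x^12*s*t^3 + (3/8:ℝ)*x^12*s*t^5 + (1/8:ℝ)*x^12*s*t^7 + (1/16:ℝ)*x^12*s^2*t^2 + (1/16:ℝ)*x^12*s^2*t^4 + (-3/32:ℝ)*x^12*s^2*t^6 + (-1/8:ℝ)*x^12*s^2*t^8 + (-1/32:ℝ)*x^12*s^2*t^10 + (-1/32:ℝ)*x^12*s^3*t^3 + (-3/32:ℝ)*x^12*s^3*t^5 + (-3/32:ℝ)*x^12*s^3*t^7 + (-1/32:ℝ)*x^12*s^3*t^9 + (1/256:ℝ)*x^12*s^4*t^4 + (1/64:ℝ)*x^12*s^4*t^6 + (3/128:ℝ)*x^12*s^4*t^8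 + (1/64:ℝ)*x^12*s^4*t^10 + (1/256:ℝ)*x^12*s^4*t^12)) * hks + (((-15/4:ℝ)*x^2*s*t + (-9/4:ℝ)*x^2*s*t^3 + (63/8:ℝ)*x^2*s^2 + (9/2:ℝ)*x^2*s^2*t^2 + (3/2:ℝ)*x^2*s^3*t + (3/4:ℝ)*x^2*s^3*t^3 + (3/4:ℝ)*x^2*s^4 + (3/8:ℝ)*x^2*s^4*t^2 + (-63/8:ℝ)*x^4 + (-9/2:ℝ)*x^4*t^2 + (27/2:ℝ)*x^4*s*t + (8:ℝ)*x^4*s*t^3 + (-117/16:ℝ)*x^4*s^2 + (-33/8:ℝ)*x^4*s^2*t^2 + (57/16:ℝ)*x^4*s^3*t + (37/16:ℝ)*x^4*s^3*t^3 + (-75/16:ℝ)*x^4*s^4 + (-21/8:ℝ)*x^4*s^4*t^2 + (-57/16:ℝ)*x^4*s^5*t + (-33/16:ℝ)*x^4*s^5*t^3 + (-9/4:ℝ)*x^4*s^6 + (-21/16:ℝ)*x^4*s^6*t^2 + (117/16:ℝ)*x^6 + (33/8:ℝ)*x^6*t^2 + (-207/16:ℝ)*x^6*s*t + (-123/16:ℝ)*x^6*s*t^3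 + (87/8:ℝ)*x^6*s^2 + (25/4:ℝ)*x^6*s^2*t^2 + (-177/32:ℝ)*x^6*s^3*t + (-109/32:ℝ)*x^6*s^3*t^3 + (9/64:ℝ)*x^6*s^4 + (3/32:ℝ)*x^6*s^4*t^2 + (93/32:ℝ)*x^6*s^5*t + (27/16:ℝ)*x^6*s^5*t^3 + (81/16:ℝ)*x^6*s^6 + (189/64:ℝ)*x^6*s^6*t^2 + (69/32:ℝ)*x^8 + (21/16:ℝ)*x^8*t^2 + (9/4:ℝ)*x^8*s*t + (23/16:ℝ)*x^8*s*t^3 + (-201/16:ℝ)*x^8*s^2 + (-117/16:ℝ)*x^8*s^2*t^2 + (-81/32:ℝ)*x^8*s^3*t + (-11/8:ℝ)*x^8*s^3*t^3 + (543/128:ℝ)*x^8*s^4 + (153/64:ℝ)*x^8*s^4*t^2 + (99/32:ℝ)*x^8*s^5*t + (57/32:ℝ)*x^8*s^5*t^3 + (-63/16:ℝ)*x^8*s^6 + (-147/64:ℝ)*x^8*s^6*t^2 + (-81/64:ℝ)*x^10 + (-3/4:ℝ)*x^10*t^2 + (39/32:ℝ)*x^10*s*t + (21/32:ℝ)*x^10*s*t^3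 + (-39/32:ℝ)*x^10*s^2 + (-21/32:ℝ)*x^10*s^2*t^2 + (237/64:ℝ)*x^10*s^3*t + (17/8:ℝ)*x^10*s^3*t^3 + (165/256:ℝ)*x^10*s^4 + (51/128:ℝ)*x^10*s^4*t^2 + (-195/64:ℝ)*x^10*s^5*t + (-225/128:ℝ)*x^10*s^5*t^3 + (81/64:ℝ)*x^10*s^6 + (189/256:ℝ)*x^10*s^6*t^2 + (-21/64:ℝ)*x^12 + (-3/16:ℝ)*x^12*t^2 + (-9/32:ℝ)*x^12*s*t + (-5/32:ℝ)*x^12*s*t^3 + (75/32:ℝ)*x^12*s^2 + (43/32:ℝ)*x^12*s^2*t^2 + (-45/64:ℝ)*x^12*s^3*t + (-13/32:ℝ)*x^12*s^3*t^3 + (-279/256:ℝ)*x^12*s^4 + (-81/128:ℝ)*x^12*s^4*t^2 + (39/64:ℝ)*x^12*s^5*t + (45/128:ℝ)*x^12*s^5*t^3 + (-9/64:ℝ)*x^12*s^6 + (-21/256:ℝ)*x^12*s^6*t^2)) * hs2 + (((3/2:ℝ)*x^2*s*t + (-21/4:ℝ)*x^2*s^2 + (-21/8:ℝ)*x^2*s^2*t^2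 + (-3/4:ℝ)*x^2*s^2*t^4 + (-9/4:ℝ)*x^2*s^3*t + (-9/8:ℝ)*x^2*s^3*t^3 + (-3/8:ℝ)*x^2*s^3*t^5 + (17/8:ℝ)*x^2*s^4 + (5/4:ℝ)*x^2*s^4*t^2 + (11/16:ℝ)*x^2*s^4*t^4 + (21/64:ℝ)*x^2*s^4*t^6 + (3/32:ℝ)*x^2*s^4*t^8 + (1/32:ℝ)*x^2*s^4*t^10 + (1/32:ℝ)*x^2*s^4*t^12 + (1/64:ℝ)*x^2*s^4*t^14 + (1/2:ℝ)*x^2*s^5*t + (1/4:ℝ)*x^2*s^5*t^3 + (5/32:ℝ)*x^2*s^5*t^5 + (1/16:ℝ)*x^2*s^5*t^7 + (1/16:ℝ)*x^2*s^5*t^9 + (1/16:ℝ)*x^2*s^5*t^11 + (1/32:ℝ)*x^2*s^5*t^13 + (1/4:ℝ)*x^2*s^6 + (1/8:ℝ)*x^2*s^6*t^2 + (5/64:ℝ)*x^2*s^6*t^4 + (1/32:ℝ)*x^2*s^6*t^6 + (1/32:ℝ)*x^2*s^6*t^8 + (1/32:ℝ)*x^2*s^6*t^10 + (1/64:ℝ)*x^2*s^6*t^12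 + (9/4:ℝ)*x^4 + (-6:ℝ)*x^4*s*t + (-1/2:ℝ)*x^4*s*t^3 + (9/4:ℝ)*x^4*s^2 + (13/16:ℝ)*x^4*s^2*t^2 + (-1/4:ℝ)*x^4*s^2*t^4 + (-5/16:ℝ)*x^4*s^2*t^6 + (17/8:ℝ)*x^4*s^3*t + (15/16:ℝ)*x^4*s^3*t^3 + (3/16:ℝ)*x^4*s^3*t^5 + (-3/32:ℝ)*x^4*s^3*t^7 + (3/32:ℝ)*x^4*s^3*t^9 + (3/32:ℝ)*x^4*s^3*t^11 + (1/32:ℝ)*x^4*s^3*t^13 + (11/16:ℝ)*x^4*s^4 + (3/8:ℝ)*x^4*s^4*t^2 + (15/64:ℝ)*x^4*s^4*t^4 + (15/64:ℝ)*x^4*s^4*t^6 + (11/32:ℝ)*x^4*s^4*t^8 + (1/4:ℝ)*x^4*s^4*t^10 + (1/16:ℝ)*x^4*s^4*t^12 + (1/64:ℝ)*x^4*s^4*t^14 + (1/64:ℝ)*x^4*s^4*t^16 + (57/16:ℝ)*x^4*s^5*t + (17/8:ℝ)*x^4*s^5*t^3 + (37/32:ℝ)*x^4*s^5*t^5 +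 (89/128:ℝ)*x^4*s^5*t^7 + (39/128:ℝ)*x^4*s^5*t^9 + (3/32:ℝ)*x^4*s^5*t^11 + (1/16:ℝ)*x^4*s^5*t^13 + (7/128:ℝ)*x^4*s^5*t^15 + (1/128:ℝ)*x^4*s^5*t^17 + (-1/16:ℝ)*x^4*s^6 + (-1/64:ℝ)*x^4*s^6*t^4 + (-9/256:ℝ)*x^4*s^6*t^8 + (-1/64:ℝ)*x^4*s^6*t^10 + (9/256:ℝ)*x^4*s^6*t^12 + (1/32:ℝ)*x^4*s^6*t^14 + (-3/256:ℝ)*x^4*s^6*t^16 + (-1/64:ℝ)*x^4*s^6*t^18 + (-1/256:ℝ)*x^4*s^6*t^20 + (-19/16:ℝ)*x^4*s^7*t + (-11/16:ℝ)*x^4*s^7*t^3 + (-51/128:ℝ)*x^4*s^7*t^5 + (-15/64:ℝ)*x^4*s^7*t^7 + (-1/8:ℝ)*x^4*s^7*t^9 + (-7/128:ℝ)*x^4*s^7*t^11 + (-5/128:ℝ)*x^4*s^7*t^13 + (-3/64:ℝ)*x^4*s^7*t^15 + (-1/32:ℝ)*x^4*s^7*t^17 + (-1/128:ℝ)*x^4*s^7*t^19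 + (-3/4:ℝ)*x^4*s^8 + (-7/16:ℝ)*x^4*s^8*t^2 + (-1/4:ℝ)*x^4*s^8*t^4 + (-37/256:ℝ)*x^4*s^8*t^6 + (-5/64:ℝ)*x^4*s^8*t^8 + (-11/256:ℝ)*x^4*s^8*t^10 + (-1/32:ℝ)*x^4*s^8*t^12 + (-7/256:ℝ)*x^4*s^8*t^14 + (-1/64:ℝ)*x^4*s^8*t^16 + (-1/256:ℝ)*x^4*s^8*t^18 + (-3/8:ℝ)*x^6 + (3/4:ℝ)*x^6*t^2 + (43/8:ℝ)*x^6*s*t + (-1/8:ℝ)*x^6*s*t^5 + (-77/16:ℝ)*x^6*s^2 + (-79/32:ℝ)*x^6*s^2*t^2 + (-7/8:ℝ)*x^6*s^2*t^4 + (-9/32:ℝ)*x^6*s^2*t^6 + (-3/64:ℝ)*x^6*s^2*t^8 + (1/16:ℝ)*x^6*s^2*t^10 + (1/64:ℝ)*x^6*s^2*t^12 + (-5/8:ℝ)*x^6*s^3*t + (-7/32:ℝ)*x^6*s^3*t^3 + (1/16:ℝ)*x^6*s^3*t^5 + (15/64:ℝ)*x^6*s^3*t^7 + (7/64:ℝ)*x^6*s^3*t^9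 + (5/64:ℝ)*x^6*s^3*t^11 + (5/64:ℝ)*x^6*s^3*t^13 + (1/32:ℝ)*x^6*s^3*t^15 + (113/32:ℝ)*x^6*s^4 + (2:ℝ)*x^6*s^4*t^2 + (145/128:ℝ)*x^6*s^4*t^4 + (137/256:ℝ)*x^6*s^4*t^6 + (5/32:ℝ)*x^6*s^4*t^8 + (43/256:ℝ)*x^6*s^4*t^10 + (1/4:ℝ)*x^6*s^4*t^12 + (27/256:ℝ)*x^6*s^4*t^14 + (1/128:ℝ)*x^6*s^4*t^16 + (1/256:ℝ)*x^6*s^4*t^18 + (-121/32:ℝ)*x^6*s^5*t + (-9/4:ℝ)*x^6*s^5*t^3 + (-163/128:ℝ)*x^6*s^5*t^5 + (-97/128:ℝ)*x^6*s^5*t^7 + (-59/256:ℝ)*x^6*s^5*t^9 + (7/256:ℝ)*x^6*s^5*t^11 + (-9/128:ℝ)*x^6*s^5*t^13 + (-19/128:ℝ)*x^6*s^5*t^15 + (-17/256:ℝ)*x^6*s^5*t^17 + (-3/256:ℝ)*x^6*s^5*t^19 + (-213/64:ℝ)*x^6*s^6 + (-31/16:ℝ)*x^6*s^6*t^2 +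 (-287/256:ℝ)*x^6*s^6*t^4 + (-165/256:ℝ)*x^6*s^6*t^6 + (-295/1024:ℝ)*x^6*s^6*t^8 + (-39/256:ℝ)*x^6*s^6*t^10 + (-249/1024:ℝ)*x^6*s^6*t^12 + (-63/256:ℝ)*x^6*s^6*t^14 + (-85/1024:ℝ)*x^6*s^6*t^16 + (3/256:ℝ)*x^6*s^6*t^18 + (9/1024:ℝ)*x^6*s^6*t^20 + (31/32:ℝ)*x^6*s^7*t + (9/16:ℝ)*x^6*s^7*t^3 + (43/128:ℝ)*x^6*s^7*t^5 + (115/512:ℝ)*x^6*s^7*t^7 + (29/256:ℝ)*x^6*s^7*t^9 + (-5/512:ℝ)*x^6*s^7*t^11 + (-3/128:ℝ)*x^6*s^7*t^13 + (25/512:ℝ)*x^6*s^7*t^15 + (15/256:ℝ)*x^6*s^7*t^17 + (9/512:ℝ)*x^6*s^7*t^19 + (27/16:ℝ)*x^6*s^8 + (63/64:ℝ)*x^6*s^8*t^2 + (9/16:ℝ)*x^6*s^8*t^4 + (333/1024:ℝ)*x^6*s^8*t^6 + (45/256:ℝ)*x^6*s^8*t^8 + (99/1024:ℝ)*x^6*s^8*t^10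 + (9/128:ℝ)*x^6*s^8*t^12 + (63/1024:ℝ)*x^6*s^8*t^14 + (9/256:ℝ)*x^6*s^8*t^16 + (9/1024:ℝ)*x^6*s^8*t^18 + (-47/16:ℝ)*x^8 + (-7/8:ℝ)*x^8*t^2 + (1/16:ℝ)*x^8*t^4 + (1:ℝ)*x^8*s*t^3 + (3/16:ℝ)*x^8*s*t^5 + (291/32:ℝ)*x^8*s^2 + (157/32:ℝ)*x^8*s^2*t^2 + (31/16:ℝ)*x^8*s^2*t^4 + (17/32:ℝ)*x^8*s^2*t^6 + (3/32:ℝ)*x^8*s^2*t^8 + (1/16:ℝ)*x^8*s^2*t^10 + (1/16:ℝ)*x^8*s^2*t^12 + (1/64:ℝ)*x^8*s^2*t^14 + (39/16:ℝ)*x^8*s^3*t + (87/64:ℝ)*x^8*s^3*t^3 + (21/32:ℝ)*x^8*s^3*t^5 + (19/64:ℝ)*x^8*s^3*t^7 + (33/128:ℝ)*x^8*s^3*t^9 + (11/64:ℝ)*x^8*s^3*t^11 + (3/64:ℝ)*x^8*s^3*t^13 + (1/64:ℝ)*x^8*s^3*t^15 + (1/128:ℝ)*x^8*s^3*t^17 +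 (-449/64:ℝ)*x^8*s^4 + (-129/32:ℝ)*x^8*s^4*t^2 + (-603/256:ℝ)*x^8*s^4*t^4 + (-81/64:ℝ)*x^8*s^4*t^6 + (-67/128:ℝ)*x^8*s^4*t^8 + (-79/256:ℝ)*x^8*s^4*t^10 + (-49/128:ℝ)*x^8*s^4*t^12 + (-9/32:ℝ)*x^8*s^4*t^14 + (-27/256:ℝ)*x^8*s^4*t^16 + (-5/256:ℝ)*x^8*s^4*t^18 + (-93/32:ℝ)*x^8*s^5*t + (-53/32:ℝ)*x^8*s^5*t^3 + (-117/128:ℝ)*x^8*s^5*t^5 + (-197/512:ℝ)*x^8*s^5*t^7 + (-45/128:ℝ)*x^8*s^5*t^9 + (-267/512:ℝ)*x^8*s^5*t^11 + (-21/64:ℝ)*x^8*s^5*t^13 + (5/512:ℝ)*x^8*s^5*t^15 + (5/64:ℝ)*x^8*s^5*t^17 + (11/512:ℝ)*x^8*s^5*t^19 + (517/128:ℝ)*x^8*s^6 + (149/64:ℝ)*x^8*s^6*t^2 + (177/128:ℝ)*x^8*s^6*t^4 + (863/1024:ℝ)*x^8*s^6*t^6 + (387/1024:ℝ)*x^8*s^6*t^8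 + (39/512:ℝ)*x^8*s^6*t^10 + (181/1024:ℝ)*x^8*s^6*t^12 + (315/1024:ℝ)*x^8*s^6*t^14 + (171/1024:ℝ)*x^8*s^6*t^16 + (1/64:ℝ)*x^8*s^6*t^18 + (-7/1024:ℝ)*x^8*s^6*t^20 + (33/32:ℝ)*x^8*s^7*t + (19/32:ℝ)*x^8*s^7*t^3 + (167/512:ℝ)*x^8*s^7*t^5 + (73/512:ℝ)*x^8*s^7*t^7 + (45/512:ℝ)*x^8*s^7*t^9 + (75/512:ℝ)*x^8*s^7*t^11 + (69/512:ℝ)*x^8*s^7*t^13 + (11/512:ℝ)*x^8*s^7*t^15 + (-17/512:ℝ)*x^8*s^7*t^17 + (-7/512:ℝ)*x^8*s^7*t^19 + (-21/16:ℝ)*x^8*s^8 + (-49/64:ℝ)*x^8*s^8*t^2 + (-7/16:ℝ)*x^8*s^8*t^4 + (-259/1024:ℝ)*x^8*s^8*t^6 + (-35/256:ℝ)*x^8*s^8*t^8 + (-77/1024:ℝ)*x^8*s^8*t^10 + (-7/128:ℝ)*x^8*s^8*t^12 + (-49/1024:ℝ)*x^8*s^8*t^14 + (-7/256:ℝ)*x^8*s^8*t^16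 + (-7/1024:ℝ)*x^8*s^8*t^18 + (27/32:ℝ)*x^10 + (-3/32:ℝ)*x^10*t^4 + (-17/16:ℝ)*x^10*s*t + (-9/16:ℝ)*x^10*s*t^3 + (-1/16:ℝ)*x^10*s*t^5 + (25/64:ℝ)*x^10*s^2 + (11/32:ℝ)*x^10*s^2*t^2 + (31/64:ℝ)*x^10*s^2*t^4 + (21/64:ℝ)*x^10*s^2*t^6 + (1/8:ℝ)*x^10*s^2*t^8 + (1/32:ℝ)*x^10*s^2*t^10 + (5/256:ℝ)*x^10*s^2*t^12 + (1/64:ℝ)*x^10*s^2*t^14 + (1/256:ℝ)*x^10*s^2*t^16 + (-33/16:ℝ)*x^10*s^3*t + (-39/32:ℝ)*x^10*s^3*t^3 + (-47/64:ℝ)*x^10*s^3*t^5 + (-15/32:ℝ)*x^10*s^3*t^7 + (-49/128:ℝ)*x^10*s^3*t^9 + (-23/64:ℝ)*x^10*s^3*t^11 + (-31/128:ℝ)*x^10*s^3*t^13 + (-3/32:ℝ)*x^10*s^3*t^15 + (-1/64:ℝ)*x^10*s^3*t^17 + (-107/128:ℝ)*x^10*s^4 + (-31/64:ℝ)*x^10*s^4*t^2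 + (-103/512:ℝ)*x^10*s^4*t^4 + (-5/256:ℝ)*x^10*s^4*t^6 + (-89/512:ℝ)*x^10*s^4*t^8 + (-175/512:ℝ)*x^10*s^4*t^10 + (-31/256:ℝ)*x^10*s^4*t^12 + (31/256:ℝ)*x^10*s^4*t^14 + (13/128:ℝ)*x^10*s^4*t^16 + (11/512:ℝ)*x^10*s^4*t^18 + (209/64:ℝ)*x^10*s^5*t + (123/64:ℝ)*x^10*s^5*t^3 + (9/8:ℝ)*x^10*s^5*t^5 + (243/512:ℝ)*x^10*s^5*t^7 + (101/512:ℝ)*x^10*s^5*t^9 + (95/256:ℝ)*x^10*s^5*t^11 + (25/64:ℝ)*x^10*s^5*t^13 + (65/512:ℝ)*x^10*s^5*t^15 + (-9/512:ℝ)*x^10*s^5*t^17 + (-3/256:ℝ)*x^10*s^5*t^19 + (-161/256:ℝ)*x^10*s^6 + (-23/64:ℝ)*x^10*s^6*t^2 + (-31/128:ℝ)*x^10*s^6*t^4 + (-203/1024:ℝ)*x^10*s^6*t^6 + (-243/4096:ℝ)*x^10*s^6*t^8 + (115/1024:ℝ)*x^10*s^6*t^10 + (219/4096:ℝ)*x^10*s^6*t^12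 + (-97/1024:ℝ)*x^10*s^6*t^14 + (-345/4096:ℝ)*x^10*s^6*t^16 + (-15/1024:ℝ)*x^10*s^6*t^18 + (9/4096:ℝ)*x^10*s^6*t^20 + (-65/64:ℝ)*x^10*s^7*t + (-75/128:ℝ)*x^10*s^7*t^3 + (-169/512:ℝ)*x^10*s^7*t^5 + (-343/2048:ℝ)*x^10*s^7*t^7 + (-49/512:ℝ)*x^10*s^7*t^9 + (-205/2048:ℝ)*x^10*s^7*t^11 + (-45/512:ℝ)*x^10*s^7*t^13 + (-61/2048:ℝ)*x^10*s^7*t^15 + (3/512:ℝ)*x^10*s^7*t^17 + (9/2048:ℝ)*x^10*s^7*t^19 + (27/64:ℝ)*x^10*s^8 + (63/256:ℝ)*x^10*s^8*t^2 + (9/64:ℝ)*x^10*s^8*t^4 + (333/4096:ℝ)*x^10*s^8*t^6 + (45/1024:ℝ)*x^10*s^8*t^8 + (99/4096:ℝ)*x^10*s^8*t^10 + (9/512:ℝ)*x^10*s^8*t^12 + (63/4096:ℝ)*x^10*s^8*t^14 + (9/1024:ℝ)*x^10*s^8*t^16 + (9/4096:ℝ)*x^10*s^8*t^18 + (7/32:ℝ)*x^12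 + (1/8:ℝ)*x^12*t^2 + (1/32:ℝ)*x^12*t^4 + (3/16:ℝ)*x^12*s*t + (1/16:ℝ)*x^12*s*t^3 + (-107/64:ℝ)*x^12*s^2 + (-31/32:ℝ)*x^12*s^2*t^2 + (-35/64:ℝ)*x^12*s^2*t^4 + (-17/64:ℝ)*x^12*s^2*t^6 + (-11/64:ℝ)*x^12*s^2*t^8 + (-5/32:ℝ)*x^12*s^2*t^10 + (-25/256:ℝ)*x^12*s^2*t^12 + (-1/32:ℝ)*x^12*s^2*t^14 + (-1/256:ℝ)*x^12*s^2*t^16 + (3/8:ℝ)*x^12*s^3*t + (17/64:ℝ)*x^12*s^3*t^3 + (13/64:ℝ)*x^12*s^3*t^5 + (1/32:ℝ)*x^12*s^3*t^7 + (-5/64:ℝ)*x^12*s^3*t^9 + (1/64:ℝ)*x^12*s^3*t^11 + (11/128:ℝ)*x^12*s^3*t^13 + (3/64:ℝ)*x^12*s^3*t^15 + (1/128:ℝ)*x^12*s^3*t^17 + (193/128:ℝ)*x^12*s^4 + (57/64:ℝ)*x^12*s^4*t^2 + (257/512:ℝ)*x^12*s^4*t^4 + (3/16:ℝ)*x^12*s^4*t^6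 + (53/512:ℝ)*x^12*s^4*t^8 + (103/512:ℝ)*x^12*s^4*t^10 + (41/256:ℝ)*x^12*s^4*t^12 + (3/128:ℝ)*x^12*s^4*t^14 + (-5/256:ℝ)*x^12*s^4*t^16 + (-3/512:ℝ)*x^12*s^4*t^18 + (-41/64:ℝ)*x^12*s^5*t + (-25/64:ℝ)*x^12*s^5*t^3 + (-1/4:ℝ)*x^12*s^5*t^5 + (-23/256:ℝ)*x^12*s^5*t^7 + (9/512:ℝ)*x^12*s^5*t^9 + (-17/512:ℝ)*x^12*s^5*t^11 + (-11/128:ℝ)*x^12*s^5*t^13 + (-11/256:ℝ)*x^12*s^5*t^15 + (-1/512:ℝ)*x^12*s^5*t^17 + (1/512:ℝ)*x^12*s^5*t^19 + (-69/256:ℝ)*x^12*s^6 + (-5/32:ℝ)*x^12*s^6*t^2 + (-21/256:ℝ)*x^12*s^6*t^4 + (-1/32:ℝ)*x^12*s^6*t^6 + (-109/4096:ℝ)*x^12*s^6*t^8 + (-53/1024:ℝ)*x^12*s^6*t^10 + (-155/4096:ℝ)*x^12*s^6*t^12 + (1/512:ℝ)*x^12*s^6*t^14 + (49/4096:ℝ)*x^12*s^6*t^16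 + (3/1024:ℝ)*x^12*s^6*t^18 + (-1/4096:ℝ)*x^12*s^6*t^20 + (13/64:ℝ)*x^12*s^7*t + (15/128:ℝ)*x^12*s^7*t^3 + (17/256:ℝ)*x^12*s^7*t^5 + (71/2048:ℝ)*x^12*s^7*t^7 + (5/256:ℝ)*x^12*s^7*t^9 + (37/2048:ℝ)*x^12*s^7*t^11 + (1/64:ℝ)*x^12*s^7*t^13 + (13/2048:ℝ)*x^12*s^7*t^15 + (-1/2048:ℝ)*x^12*s^7*t^19 + (-3/64:ℝ)*x^12*s^8 + (-7/256:ℝ)*x^12*s^8*t^2 + (-1/64:ℝ)*x^12*s^8*t^4 + (-37/4096:ℝ)*x^12*s^8*t^6 + (-5/1024:ℝ)*x^12*s^8*t^8 + (-11/4096:ℝ)*x^12*s^8*t^10 + (-1/512:ℝ)*x^12*s^8*t^12 + (-7/4096:ℝ)*x^12*s^8*t^14 + (-1/1024:ℝ)*x^12*s^8*t^16 + (-1/4096:ℝ)*x^12*s^8*t^18)) * ht4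

lemma transf_two (hs0 : 0 < s) (ht0 : 0 < t) (hs2 : s^2 = 2) (ht4 : t^4 = 3) :
    ellK (1/s) = (s*t*(3-t^2)/2) * ellK ((t^2-1)*(s-t)/2) := by
  obtain ⟨⟨hsl,hsu⟩,⟨htl,htu⟩,⟨ht2l,ht2u⟩,⟨ht3l,ht3u⟩,⟨hstl,hstu⟩,⟨hst2l,hst2u⟩,⟨hst3l,hst3u⟩⟩ :=
    bounds_pack hs0 ht0 hs2 ht4
  have hks : ((1:ℝ)/s)^2 = 1/2 := by rw [div_pow, one_pow, hs2]
  apply ellK_transform ((t^2-1)*(s-t)/2) (1/s) (s*t*(3-t^2)/2)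
      (1 + (-3 + (3*(s*t) + 6*t^2 - s*t^3)/4) - s*t*(3-t^2)/2)
      (-3 + (3*(s*t) + 6*t^2 - s*t^3)/4)
  · -- 0 ≤ k
    linarith
  · -- k < 1
    linarith
  · positivity
  · rw [div_lt_one hs0]; linarith
  · -- 1 ≤ a
    linarith
  · -- 0 ≤ b
    linarith
  · -- 0 ≤ c
    linarith
  · ring
  · -- 0 < 2 - a + b
    linarith
  · -- 1 + 2b ≤ a
    linarith
  · -- 0 < W(1)
    have e : s*t*(3-t^2)/2 + 3*(1 + (-3 + (3*(s*t) + 6*t^2 - s*t^3)/4) - s*t*(3-t^2)/2)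
        - (s*t*(3-t^2)/2)*(-3 + (3*(s*t) + 6*t^2 - s*t^3)/4)
        + (1 + (-3 + (3*(s*t) + 6*t^2 - s*t^3)/4) - s*t*(3-t^2)/2)*(-3 + (3*(s*t) + 6*t^2 - s*t^3)/4)
        = ((27/2:ℝ) + (-15/2:ℝ)*t^2 + (27/4:ℝ)*s*t + (-15/4:ℝ)*s*t^3) := by
      linear_combination (((27/8:ℝ) + (-9/4:ℝ)*t^2)) * hs2 + (((9/4:ℝ) + (3/4:ℝ)*s*t + (9/8:ℝ)*s^2 + (-3/16:ℝ)*s^2*t^2)) * ht4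
    linarith [e]
  · -- 3b + 2bc ≤ ac
    have e : (s*t*(3-t^2)/2)*(-3 + (3*(s*t) + 6*t^2 - s*t^3)/4)
        - (3*(1 + (-3 + (3*(s*t) + 6*t^2 - s*t^3)/4) - s*t*(3-t^2)/2)
          + 2*((1 + (-3 + (3*(s*t) + 6*t^2 - s*t^3)/4) - s*t*(3-t^2)/2)*(-3 + (3*(s*t) + 6*t^2 - s*t^3)/4)))
        = ((-57/2:ℝ) + (33/2:ℝ)*t^2 + (-6:ℝ)*s*t + (7/2:ℝ)*s*t^3) := by
      linear_combination (((-9/2:ℝ) + (3:ℝ)*t^2)) * hs2 + (((-9/2:ℝ) + (-3/4:ℝ)*s*t + (-3/2:ℝ)*s^2 + (1/4:ℝ)*s^2*t^2)) * ht4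
    linarith [e]
  · intro x
    linear_combination (((81/16:ℝ)*x^2*s^4*t^4 + (-27/4:ℝ)*x^2*s^4*t^6 + (27/8:ℝ)*x^2*s^4*t^8 + (-3/4:ℝ)*x^2*s^4*t^10 + (1/16:ℝ)*x^2*s^4*t^12 + (-27/2:ℝ)*x^4*s^3*t^3 + (189/8:ℝ)*x^4*s^3*t^5 + (-117/8:ℝ)*x^4*s^3*t^7 + (31/8:ℝ)*x^4*s^3*t^9 + (-3/8:ℝ)*x^4*s^3*t^11 + (-567/16:ℝ)*x^4*s^4*t^4 + (999/16:ℝ)*x^4*s^4*t^6 + (-351/8:ℝ)*x^4*s^4*t^8 + (123/8:ℝ)*x^4*s^4*t^10 + (-43/16:ℝ)*x^4*s^4*t^12 + (3/16:ℝ)*x^4*s^4*t^14 + (243/32:ℝ)*x^4*s^5*t^5 + (-405/32:ℝ)*x^4*s^5*t^7 + (135/16:ℝ)*x^4*s^5*t^9 + (-45/16:ℝ)*x^4*s^5*t^11 + (15/32:ℝ)*x^4*s^5*t^13 + (-1/32:ℝ)*x^4*s^5*t^15 + (-729/64:ℝ)*x^4*s^6*t^6 + (729/32:ℝ)*x^4*s^6*t^8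 + (-1215/64:ℝ)*x^4*s^6*t^10 + (135/16:ℝ)*x^4*s^6*t^12 + (-135/64:ℝ)*x^4*s^6*t^14 + (9/32:ℝ)*x^4*s^6*t^16 + (-1/64:ℝ)*x^4*s^6*t^18 + (9:ℝ)*x^6*s^2*t^2 + (-39/2:ℝ)*x^6*s^2*t^4 + (241/16:ℝ)*x^6*s^2*t^6 + (-39/8:ℝ)*x^6*s^2*t^8 + (9/16:ℝ)*x^6*s^2*t^10 + (351/4:ℝ)*x^6*s^3*t^3 + (-3105/16:ℝ)*x^6*s^3*t^5 + (2655/16:ℝ)*x^6*s^3*t^7 + (-1105/16:ℝ)*x^6*s^3*t^9 + (225/16:ℝ)*x^6*s^3*t^11 + (-9/8:ℝ)*x^6*s^3*t^13 + (3645/64:ℝ)*x^6*s^4*t^4 + (-243/2:ℝ)*x^6*s^4*t^6 + (7047/64:ℝ)*x^6*s^4*t^8 + (-54:ℝ)*x^6*s^4*t^10 + (963/64:ℝ)*x^6*s^4*t^12 + (-9/4:ℝ)*x^6*s^4*t^14 + (9/64:ℝ)*x^6*s^4*t^16 + (243/8:ℝ)*x^6*s^5*t^5 + (-5427/64:ℝ)*x^6*s^5*t^7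 + (5805/64:ℝ)*x^6*s^5*t^9 + (-1575/32:ℝ)*x^6*s^5*t^11 + (465/32:ℝ)*x^6*s^5*t^13 + (-143/64:ℝ)*x^6*s^5*t^15 + (9/64:ℝ)*x^6*s^5*t^17 + (6561/256:ℝ)*x^6*s^6*t^6 + (-6561/128:ℝ)*x^6*s^6*t^8 + (10935/256:ℝ)*x^6*s^6*t^10 + (-1215/64:ℝ)*x^6*s^6*t^12 + (1215/256:ℝ)*x^6*s^6*t^14 + (-81/128:ℝ)*x^6*s^6*t^16 + (9/256:ℝ)*x^6*s^6*t^18 + (-54:ℝ)*x^8*s^2*t^2 + (144:ℝ)*x^8*s^2*t^4 + (-1191/8:ℝ)*x^8*s^2*t^6 + (1191/16:ℝ)*x^8*s^2*t^8 + (-18:ℝ)*x^8*s^2*t^10 + (27/16:ℝ)*x^8*s^2*t^12 + (-297/2:ℝ)*x^8*s^3*t^3 + (783/2:ℝ)*x^8*s^3*t^5 + (-13491/32:ℝ)*x^8*s^3*t^7 + (1907/8:ℝ)*x^8*s^3*t^9 + (-1197/16:ℝ)*x^8*s^3*t^11 + (99/8:ℝ)*x^8*s^3*t^13 + (-27/32:ℝ)*x^8*s^3*t^15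 + (-3321/32:ℝ)*x^8*s^4*t^4 + (18333/64:ℝ)*x^8*s^4*t^6 + (-20709/64:ℝ)*x^8*s^4*t^8 + (6081/32:ℝ)*x^8*s^4*t^10 + (-979/16:ℝ)*x^8*s^4*t^12 + (657/64:ℝ)*x^8*s^4*t^14 + (-45/64:ℝ)*x^8*s^4*t^16 + (-9477/128:ℝ)*x^8*s^5*t^5 + (11907/64:ℝ)*x^8*s^5*t^7 + (-23895/128:ℝ)*x^8*s^5*t^9 + (3105/32:ℝ)*x^8*s^5*t^11 + (-3555/128:ℝ)*x^8*s^5*t^13 + (267/64:ℝ)*x^8*s^5*t^15 + (-33/128:ℝ)*x^8*s^5*t^17 + (-5103/256:ℝ)*x^8*s^6*t^6 + (5103/128:ℝ)*x^8*s^6*t^8 + (-8505/256:ℝ)*x^8*s^6*t^10 + (945/64:ℝ)*x^8*s^6*t^12 + (-945/256:ℝ)*x^8*s^6*t^14 + (63/128:ℝ)*x^8*s^6*t^16 + (-7/256:ℝ)*x^8*s^6*t^18 + (81:ℝ)*x^10*s^2*t^2 + (-513/2:ℝ)*x^10*s^2*t^4 + (5301/16:ℝ)*x^10*s^2*t^6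 + (-3573/16:ℝ)*x^10*s^2*t^8 + (5301/64:ℝ)*x^10*s^2*t^10 + (-513/32:ℝ)*x^10*s^2*t^12 + (81/64:ℝ)*x^10*s^2*t^14 + (513/4:ℝ)*x^10*s^3*t^3 + (-6345/16:ℝ)*x^10*s^3*t^5 + (16029/32:ℝ)*x^10*s^3*t^7 + (-10547/32:ℝ)*x^10*s^3*t^9 + (3801/32:ℝ)*x^10*s^3*t^11 + (-711/32:ℝ)*x^10*s^3*t^13 + (27/16:ℝ)*x^10*s^3*t^15 + (6885/64:ℝ)*x^10*s^4*t^4 + (-19629/64:ℝ)*x^10*s^4*t^6 + (45063/128:ℝ)*x^10*s^4*t^8 + (-3333/16:ℝ)*x^10*s^4*t^10 + (2153/32:ℝ)*x^10*s^4*t^12 + (-723/64:ℝ)*x^10*s^4*t^14 + (99/128:ℝ)*x^10*s^4*t^16 + (5589/128:ℝ)*x^10*s^5*t^5 + (-13689/128:ℝ)*x^10*s^5*t^7 + (3375/32:ℝ)*x^10*s^5*t^9 + (-3465/64:ℝ)*x^10*s^5*t^11 + (1965/128:ℝ)*x^10*s^5*t^13 + (-293/128:ℝ)*x^10*s^5*t^15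 + (9/64:ℝ)*x^10*s^5*t^17 + (6561/1024:ℝ)*x^10*s^6*t^6 + (-6561/512:ℝ)*x^10*s^6*t^8 + (10935/1024:ℝ)*x^10*s^6*t^10 + (-1215/256:ℝ)*x^10*s^6*t^12 + (1215/1024:ℝ)*x^10*s^6*t^14 + (-81/512:ℝ)*x^10*s^6*t^16 + (9/1024:ℝ)*x^10*s^6*t^18 + (-36:ℝ)*x^12*s^2*t^2 + (132:ℝ)*x^12*s^2*t^4 + (-395/2:ℝ)*x^12*s^2*t^6 + (615/4:ℝ)*x^12*s^2*t^8 + (-4185/64:ℝ)*x^12*s^2*t^10 + (459/32:ℝ)*x^12*s^2*t^12 + (-81/64:ℝ)*x^12*s^2*t^14 + (-54:ℝ)*x^12*s^3*t^3 + (351/2:ℝ)*x^12*s^3*t^5 + (-1845/8:ℝ)*x^12*s^3*t^7 + (5005/32:ℝ)*x^12*s^3*t^9 + (-1845/32:ℝ)*x^12*s^3*t^11 + (351/32:ℝ)*x^12*s^3*t^13 + (-27/32:ℝ)*x^12*s^3*t^15 + (-243/8:ℝ)*x^12*s^4*t^4 + (1377/16:ℝ)*x^12*s^4*t^6 + (-12555/128:ℝ)*x^12*s^4*t^8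 + (1845/32:ℝ)*x^12*s^4*t^10 + (-1185/64:ℝ)*x^12*s^4*t^12 + (99/32:ℝ)*x^12*s^4*t^14 + (-27/128:ℝ)*x^12*s^4*t^16 + (-243/32:ℝ)*x^12*s^5*t^5 + (2349/128:ℝ)*x^12*s^5*t^7 + (-2295/128:ℝ)*x^12*s^5*t^9 + (585/64:ℝ)*x^12*s^5*t^11 + (-165/64:ℝ)*x^12*s^5*t^13 + (49/128:ℝ)*x^12*s^5*t^15 + (-3/128:ℝ)*x^12*s^5*t^17 + (-729/1024:ℝ)*x^12*s^6*t^6 + (729/512:ℝ)*x^12*s^6*t^8 + (-1215/1024:ℝ)*x^12*s^6*t^10 + (135/256:ℝ)*x^12*s^6*t^12 + (-135/1024:ℝ)*x^12*s^6*t^14 + (9/512:ℝ)*x^12*s^6*t^16 + (-1/1024:ℝ)*x^12*s^6*t^18)) * hks + (((63/4:ℝ)*x^2*s*t + (-39/4:ℝ)*x^2*s*t^3 + (639/8:ℝ)*x^2*s^2 + (-183/4:ℝ)*x^2*s^2*t^2 + (-387/8:ℝ)*x^4 + (27:ℝ)*x^4*t^2 + (297/4:ℝ)*x^4*s*t + (-165/4:ℝ)*x^4*s*t^3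 + (-7569/16:ℝ)*x^4*s^2 + (2175/8:ℝ)*x^4*s^2*t^2 + (2331/16:ℝ)*x^4*s^3*t + (-1341/16:ℝ)*x^4*s^3*t^3 + (3645/16:ℝ)*x^4*s^4 + (-1053/8:ℝ)*x^4*s^4*t^2 + (1161/16:ℝ)*x^6 + (-81/2:ℝ)*x^6*t^2 + (-4275/16:ℝ)*x^6*s*t + (2439/16:ℝ)*x^6*s*t^3 + (1845:ℝ)*x^6*s^2 + (-17013/16:ℝ)*x^6*s^2*t^2 + (-5355/32:ℝ)*x^6*s^3*t + (3069/32:ℝ)*x^6*s^3*t^3 + (-41499/64:ℝ)*x^6*s^4 + (2997/8:ℝ)*x^6*s^4*t^2 + (12285/32:ℝ)*x^8 + (-3555/16:ℝ)*x^8*t^2 + (1791/4:ℝ)*x^8*s*t + (-4119/16:ℝ)*x^8*s*t^3 + (-45423/16:ℝ)*x^8*s^2 + (13101/8:ℝ)*x^8*s^2*t^2 + (-18765/32:ℝ)*x^8*s^3*t + (5427/16:ℝ)*x^8*s^3*t^3 + (69255/128:ℝ)*x^8*s^4 + (-20007/64:ℝ)*x^8*s^4*t^2 + (-60381/64:ℝ)*x^10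 + (17433/32:ℝ)*x^10*t^2 + (-30015/32:ℝ)*x^10*s*t + (8661/16:ℝ)*x^10*s*t^3 + (15759/8:ℝ)*x^10*s^2 + (-72759/64:ℝ)*x^10*s^2*t^2 + (47457/64:ℝ)*x^10*s^3*t + (-13707/32:ℝ)*x^10*s^3*t^3 + (-35883/256:ℝ)*x^10*s^4 + (81:ℝ)*x^10*s^4*t^2 + (34263/64:ℝ)*x^12 + (-9891/32:ℝ)*x^12*t^2 + (21357/32:ℝ)*x^12*s*t + (-6165/16:ℝ)*x^12*s*t^3 + (-2331/4:ℝ)*x^12*s^2 + (21531/64:ℝ)*x^12*s^2*t^2 + (-8541/64:ℝ)*x^12*s^3*t + (1233/16:ℝ)*x^12*s^3*t^3 + (5049/256:ℝ)*x^12*s^4 + (-729/64:ℝ)*x^12*s^4*t^2)) * hs2 + (((-9/2:ℝ)*x^2*s*t + (-213/4:ℝ)*x^2*s^2 + (20:ℝ)*x^2*s^2*t^2 + (-61/16:ℝ)*x^2*s^2*t^4 + (1/2:ℝ)*x^2*s^2*t^6 + (-1/16:ℝ)*x^2*s^2*t^8 + (21/4:ℝ)*x^2*s^3*t + (-1/4:ℝ)*x^2*s^3*t^3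 + (-5/8:ℝ)*x^2*s^3*t^5 + (1/8:ℝ)*x^2*s^3*t^7 + (213/8:ℝ)*x^2*s^4 + (-241/16:ℝ)*x^2*s^4*t^2 + (187/32:ℝ)*x^2*s^4*t^4 + (-19/16:ℝ)*x^2*s^4*t^6 + (3/32:ℝ)*x^2*s^4*t^8 + (81/4:ℝ)*x^4 + (-105/2:ℝ)*x^4*s*t + (93/4:ℝ)*x^4*s*t^3 + (-57/8:ℝ)*x^4*s*t^5 + (9/8:ℝ)*x^4*s*t^7 + (1197/4:ℝ)*x^4*s^2 + (-2135/16:ℝ)*x^4*s^2*t^2 + (31:ℝ)*x^4*s^2*t^4 + (5/8:ℝ)*x^4*s^2*t^6 + (-13/8:ℝ)*x^4*s^2*t^8 + (3/16:ℝ)*x^4*s^2*t^10 + (-591/8:ℝ)*x^4*s^3*t + (269/8:ℝ)*x^4*s^3*t^3 + (-357/32:ℝ)*x^4*s^3*t^5 + (67/32:ℝ)*x^4*s^3*t^7 + (-1/32:ℝ)*x^4*s^3*t^9 + (-1/32:ℝ)*x^4*s^3*t^11 + (-4953/16:ℝ)*x^4*s^4 + (715/4:ℝ)*x^4*s^4*t^2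 + (-5399/64:ℝ)*x^4*s^4*t^4 + (841/32:ℝ)*x^4*s^4*t^6 + (-295/64:ℝ)*x^4*s^4*t^8 + (11/32:ℝ)*x^4*s^4*t^10 + (777/16:ℝ)*x^4*s^5*t + (-903/32:ℝ)*x^4*s^5*t^3 + (847/64:ℝ)*x^4*s^5*t^5 + (-257/64:ℝ)*x^4*s^5*t^7 + (43/64:ℝ)*x^4*s^5*t^9 + (-3/64:ℝ)*x^4*s^5*t^11 + (1215/16:ℝ)*x^4*s^6 + (-351/8:ℝ)*x^4*s^6*t^2 + (405/16:ℝ)*x^4*s^6*t^4 + (-1629/128:ℝ)*x^4*s^6*t^6 + (297/64:ℝ)*x^4*s^6*t^8 + (-69/64:ℝ)*x^4*s^6*t^10 + (9/64:ℝ)*x^4*s^6*t^12 + (-1/128:ℝ)*x^4*s^6*t^14 + (-99/8:ℝ)*x^6 + (-36:ℝ)*x^6*t^2 + (189/8:ℝ)*x^6*t^4 + (-81/16:ℝ)*x^6*t^6 + (1305/8:ℝ)*x^6*s*t + (-405/8:ℝ)*x^6*s*t^3 + (-27/16:ℝ)*x^6*s*t^5 + (105/16:ℝ)*x^6*s*t^7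 + (-9/8:ℝ)*x^6*s*t^9 + (-19245/16:ℝ)*x^6*s^2 + (9695/16:ℝ)*x^6*s^2*t^2 + (-13705/64:ℝ)*x^6*s^2*t^4 + (1483/32:ℝ)*x^6*s^2*t^6 + (-257/32:ℝ)*x^6*s^2*t^8 + (3/2:ℝ)*x^6*s^2*t^10 + (-9/64:ℝ)*x^6*s^2*t^12 + (93/4:ℝ)*x^6*s^3*t + (-1/4:ℝ)*x^6*s^3*t^3 + (-71/8:ℝ)*x^6*s^3*t^5 + (297/64:ℝ)*x^6*s^3*t^7 + (-23/64:ℝ)*x^6*s^3*t^9 + (-17/64:ℝ)*x^6*s^3*t^11 + (3/64:ℝ)*x^6*s^3*t^13 + (33513/32:ℝ)*x^6*s^4 + (-38593/64:ℝ)*x^6*s^4*t^2 + (38623/128:ℝ)*x^6*s^4*t^4 + (-27789/256:ℝ)*x^6*s^4*t^6 + (3125/128:ℝ)*x^6*s^4*t^8 + (-387/128:ℝ)*x^6*s^4*t^10 + (11/64:ℝ)*x^6*s^4*t^12 + (-1/256:ℝ)*x^6*s^4*t^14 + (-1785/32:ℝ)*x^6*s^5*t + (507/16:ℝ)*x^6*s^5*t^3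 + (-1435/128:ℝ)*x^6*s^5*t^5 + (53/128:ℝ)*x^6*s^5*t^7 + (141/128:ℝ)*x^6*s^5*t^9 + (-43/128:ℝ)*x^6*s^5*t^11 + (1/32:ℝ)*x^6*s^5*t^13 + (-13833/64:ℝ)*x^6*s^6 + (999/8:ℝ)*x^6*s^6*t^2 + (-18417/256:ℝ)*x^6*s^6*t^4 + (18459/512:ℝ)*x^6*s^6*t^6 + (-3349/256:ℝ)*x^6*s^6*t^8 + (773/256:ℝ)*x^6*s^6*t^10 + (-25/64:ℝ)*x^6*s^6*t^12 + (11/512:ℝ)*x^6*s^6*t^14 + (-4671/16:ℝ)*x^8 + (1737/8:ℝ)*x^8*t^2 + (-1953/16:ℝ)*x^8*t^4 + (621/16:ℝ)*x^8*t^6 + (-81/16:ℝ)*x^8*t^8 + (-555/2:ℝ)*x^8*s*t + (717/8:ℝ)*x^8*s*t^3 + (273/16:ℝ)*x^8*s*t^5 + (-921/32:ℝ)*x^8*s*t^7 + (9:ℝ)*x^8*s*t^9 + (-27/32:ℝ)*x^8*s*t^11 + (64371/32:ℝ)*x^8*s^2 + (-8377/8:ℝ)*x^8*s^2*t^2 +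 (25981/64:ℝ)*x^8*s^2*t^4 + (-6341/64:ℝ)*x^8*s^2*t^6 + (1045/64:ℝ)*x^8*s^2*t^8 + (-21/8:ℝ)*x^8*s^2*t^10 + (9/32:ℝ)*x^8*s^2*t^12 + (8679/16:ℝ)*x^8*s^3*t + (-9835/32:ℝ)*x^8*s^3*t^3 + (18871/128:ℝ)*x^8*s^3*t^5 + (-3203/64:ℝ)*x^8*s^3*t^7 + (39/4:ℝ)*x^8*s^3*t^9 + (-45/64:ℝ)*x^8*s^3*t^11 + (-3/128:ℝ)*x^8*s^3*t^13 + (-83649/64:ℝ)*x^8*s^4 + (48145/64:ℝ)*x^8*s^4*t^2 + (-100823/256:ℝ)*x^8*s^4*t^4 + (20255/128:ℝ)*x^8*s^4*t^6 + (-10647/256:ℝ)*x^8*s^4*t^8 + (783/128:ℝ)*x^8*s^4*t^10 + (-3/8:ℝ)*x^8*s^4*t^12 + (-6255/32:ℝ)*x^8*s^5*t + (14499/128:ℝ)*x^8*s^5*t^3 + (-16167/256:ℝ)*x^8*s^5*t^5 + (1773/64:ℝ)*x^8*s^5*t^7 + (-63/8:ℝ)*x^8*s^5*t^9 + (159/128:ℝ)*x^8*s^5*t^11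 + (-21/256:ℝ)*x^8*s^5*t^13 + (23085/128:ℝ)*x^8*s^6 + (-6669/64:ℝ)*x^8*s^6*t^2 + (7695/128:ℝ)*x^8*s^6*t^4 + (-30951/1024:ℝ)*x^8*s^6*t^6 + (5643/512:ℝ)*x^8*s^6*t^8 + (-1311/512:ℝ)*x^8*s^6*t^10 + (171/512:ℝ)*x^8*s^6*t^12 + (-19/1024:ℝ)*x^8*s^6*t^14 + (20511/32:ℝ)*x^10 + (-6147/16:ℝ)*x^10*t^2 + (6525/32:ℝ)*x^10*t^4 + (-153/2:ℝ)*x^10*t^6 + (513/32:ℝ)*x^10*t^8 + (-81/64:ℝ)*x^10*t^10 + (9765/16:ℝ)*x^10*s*t + (-2331/8:ℝ)*x^10*s*t^3 + (171/2:ℝ)*x^10*s*t^5 + (-51/16:ℝ)*x^10*s*t^7 + (-81/16:ℝ)*x^10*s*t^9 + (27/32:ℝ)*x^10*s*t^11 + (-103599/64:ℝ)*x^10*s^2 + (13775/16:ℝ)*x^10*s^2*t^2 + (-5683/16:ℝ)*x^10*s^2*t^4 + (365/4:ℝ)*x^10*s^2*t^6 + (-1511/128:ℝ)*x^10*s^2*t^8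 + (99/128:ℝ)*x^10*s^2*t^10 + (-9/128:ℝ)*x^10*s^2*t^12 + (-3231/4:ℝ)*x^10*s^3*t + (3547/8:ℝ)*x^10*s^3*t^3 + (-6451/32:ℝ)*x^10*s^3*t^5 + (8393/128:ℝ)*x^10*s^3*t^7 + (-1685/128:ℝ)*x^10*s^3*t^9 + (163/128:ℝ)*x^10*s^3*t^11 + (-3/128:ℝ)*x^10*s^3*t^13 + (96009/128:ℝ)*x^10*s^4 + (-6931/16:ℝ)*x^10*s^4*t^2 + (60647/256:ℝ)*x^10*s^4*t^4 + (-106769/1024:ℝ)*x^10*s^4*t^6 + (15647/512:ℝ)*x^10*s^4*t^8 + (-2549/512:ℝ)*x^10*s^4*t^10 + (165/512:ℝ)*x^10*s^4*t^12 + (3/1024:ℝ)*x^10*s^4*t^14 + (15819/64:ℝ)*x^10*s^5*t + (-285/2:ℝ)*x^10*s^5*t^3 + (38323/512:ℝ)*x^10*s^5*t^5 + (-475/16:ℝ)*x^10*s^5*t^7 + (485/64:ℝ)*x^10*s^5*t^9 + (-69/64:ℝ)*x^10*s^5*t^11 + (33/512:ℝ)*x^10*s^5*t^13 + (-11961/256:ℝ)*x^10*s^6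 + (27:ℝ)*x^10*s^6*t^2 + (-16029/1024:ℝ)*x^10*s^6*t^4 + (16299/2048:ℝ)*x^10*s^6*t^6 + (-3021/1024:ℝ)*x^10*s^6*t^8 + (717/1024:ℝ)*x^10*s^6*t^10 + (-3/32:ℝ)*x^10*s^6*t^12 + (11/2048:ℝ)*x^10*s^6*t^14 + (-11421/32:ℝ)*x^12 + (3249/16:ℝ)*x^12*t^2 + (-3375/32:ℝ)*x^12*t^4 + (171/4:ℝ)*x^12*t^6 + (-351/32:ℝ)*x^12*t^8 + (81/64:ℝ)*x^12*t^10 + (-7023/16:ℝ)*x^12*s*t + (1833/8:ℝ)*x^12*s*t^3 + (-375/4:ℝ)*x^12*s*t^5 + (777/32:ℝ)*x^12*s*t^7 + (-45/16:ℝ)*x^12*s*t^9 + (36093/64:ℝ)*x^12*s^2 + (-4901/16:ℝ)*x^12*s^2*t^2 + (2179/16:ℝ)*x^12*s^2*t^4 + (-2537/64:ℝ)*x^12*s^2*t^6 + (665/128:ℝ)*x^12*s^2*t^8 + (21/128:ℝ)*x^12*s^2*t^10 + (-9/128:ℝ)*x^12*s^2*t^12 + (4971/16:ℝ)*x^12*s^3*t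 + (-5413/32:ℝ)*x^12*s^3*t^3 + (9577/128:ℝ)*x^12*s^3*t^5 + (-2865/128:ℝ)*x^12*s^3*t^7 + (487/128:ℝ)*x^12*s^3*t^9 + (-35/128:ℝ)*x^12*s^3*t^11 + (-26547/128:ℝ)*x^12*s^4 + (481/4:ℝ)*x^12*s^4*t^2 + (-8485/128:ℝ)*x^12*s^4*t^4 + (30189/1024:ℝ)*x^12*s^4*t^6 + (-4541/512:ℝ)*x^12*s^4*t^8 + (789/512:ℝ)*x^12*s^4*t^10 + (-61/512:ℝ)*x^12*s^4*t^12 + (1/1024:ℝ)*x^12*s^4*t^14 + (-2847/64:ℝ)*x^12*s^5*t + (3297/128:ℝ)*x^12*s^5*t^3 + (-7025/512:ℝ)*x^12*s^5*t^5 + (715/128:ℝ)*x^12*s^5*t^7 + (-189/128:ℝ)*x^12*s^5*t^9 + (7/32:ℝ)*x^12*s^5*t^11 + (-7/512:ℝ)*x^12*s^5*t^13 + (1683/256:ℝ)*x^12*s^6 + (-243/64:ℝ)*x^12*s^6*t^2 + (2217/1024:ℝ)*x^12*s^6*t^4 + (-2169/2048:ℝ)*x^12*s^6*t^6 + (379/1024:ℝ)*x^12*s^6*t^8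 + (-83/1024:ℝ)*x^12*s^6*t^10 + (5/512:ℝ)*x^12*s^6*t^12 + (-1/2048:ℝ)*x^12*s^6*t^14)) * ht4

end Instances

lemma mu_strictAntiOn : StrictAntiOn mu (Set.Ioo 0 1) := by
  intro r₁ h₁ r₂ h₂ h12
  obtain ⟨h₁0, h₁1⟩ := h₁
  obtain ⟨h₂0, h₂1⟩ := h₂
  have hB1 : 0 < ellK r₁ := ellK_pos (by nlinarith)
  have hB2 : 0 < ellK r₂ := ellK_pos (by nlinarith)
  have hB12 : ellK r₁ < ellK r₂ := ellK_lt h₁0.le h12 h₂1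
  have hsq1 : Real.sqrt (1 - r₁^2) ^ 2 = 1 - r₁^2 := Real.sq_sqrt (by nlinarith)
  have hsq2 : Real.sqrt (1 - r₂^2) ^ 2 = 1 - r₂^2 := Real.sq_sqrt (by nlinarith)
  have hA12 : Real.sqrt (1 - r₂^2) < Real.sqrt (1 - r₁^2) :=
    Real.sqrt_lt_sqrt (by nlinarith) (by nlinarith)
  have hAlt1 : Real.sqrt (1 - r₁^2) < 1 := by
    have h := Real.sqrt_lt_sqrt (by nlinarith : (0:ℝ) ≤ 1 - r₁^2)
      (by nlinarith : 1 - r₁^2 < 1)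
    rwa [Real.sqrt_one] at h
  have hA2pos : 0 < ellK (Real.sqrt (1 - r₂^2)) := ellK_pos (by nlinarith [Real.sqrt_nonneg (1 - r₂^2)])
  have hA21 : ellK (Real.sqrt (1 - r₂^2)) < ellK (Real.sqrt (1 - r₁^2)) :=
    ellK_lt (Real.sqrt_nonneg _) hA12 hAlt1
  have hA1pos : 0 < ellK (Real.sqrt (1 - r₁^2)) := hA2pos.trans hA21
  have hchain : ellK (Real.sqrt (1 - r₂^2)) * ellK r₁
      < ellK (Real.sqrt (1 - r₁^2)) * ellK r₂ := by
    nlinarith [mul_lt_mul_of_pos_right hA21 hB1, mul_lt_mul_of_pos_left hB12 hA1pos]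
  show mu r₂ < mu r₁
  unfold mu
  rw [div_lt_div_iff₀ hB2 hB1]
  nlinarith [mul_lt_mul_of_pos_left hchain (by positivity : (0:ℝ) < Real.pi/2)]

theorem phi_three_identity :
    Real.sqrt (phi 3 (1 / Real.sqrt 2)) +
      Real.sqrt (Real.sqrt (1 - (phi 3 (1 / Real.sqrt 2))^2)) = (2:ℝ) ^ ((1:ℝ)/4) := by
  set s : ℝ := Real.sqrt 2 with hs_def
  set t : ℝ := Real.sqrt (Real.sqrt 3) with ht_def
  have hs0 : 0 < s := Real.sqrt_pos.2 (by norm_num)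
  have h3pos : (0:ℝ) < Real.sqrt 3 := Real.sqrt_pos.2 (by norm_num)
  have ht0 : 0 < t := Real.sqrt_pos.2 h3pos
  have hs2 : s^2 = 2 := Real.sq_sqrt (by norm_num)
  have ht2 : t^2 = Real.sqrt 3 := Real.sq_sqrt h3pos.le
  have ht4 : t^4 = 3 := by
    have : t^4 = (t^2)^2 := by ring
    rw [this, ht2]
    exact Real.sq_sqrt (by norm_num)
  obtain ⟨⟨hsl,hsu⟩,⟨htl,htu⟩,⟨ht2l,ht2u⟩,⟨ht3l,ht3u⟩,⟨hstl,hstu⟩,⟨hst2l,hst2u⟩,⟨hst3l,hst3u⟩⟩ :=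
    bounds_pack hs0 ht0 hs2 ht4
  set u : ℝ := (t^2-1)*(s+t)/2 with hu_def
  set v : ℝ := (t^2-1)*(s-t)/2 with hv_def
  have hu_pos : 0 < u := by rw [hu_def]; nlinarith
  have hv_pos : 0 < v := by rw [hv_def]; nlinarith
  have hu_lt : u < 1 := by rw [hu_def]; nlinarith
  have hv_lt : v < 1 := by rw [hv_def]; nlinarith
  have huv_sq : 1 - u^2 = v^2 := by
    rw [hu_def, hv_def]
    linear_combination (((-2:ℝ) + (1:ℝ)*t^2)) * hs2 + (((1:ℝ) + (-1/2:ℝ)*t^2 + (-1/2:ℝ)*s^2)) * ht4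
  -- the two transformation identities
  have hT1 : ellK u = (s*t*(1+t^2)/2) * ellK (1/s) := transf_one hs0 ht0 hs2 ht4
  have hT2 : ellK (1/s) = (s*t*(3-t^2)/2) * ellK v := transf_two hs0 ht0 hs2 ht4
  have ha1_pos : 0 < s*t*(1+t^2)/2 := by nlinarith
  have ha2_pos : 0 < s*t*(3-t^2)/2 := by nlinarith
  have ha1a2 : (s*t*(1+t^2)/2) * (s*t*(3-t^2)/2) = 3 := by
    linear_combination (((3/2:ℝ))) * hs2 + (((1/2:ℝ)*s^2 + (-1/4:ℝ)*s^2*t^2)) * ht4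
  have hEs_pos : 0 < ellK (1/s) := ellK_pos (by rw [div_pow, one_pow, hs2]; norm_num)
  have hEu_pos : 0 < ellK u := ellK_pos (by nlinarith)
  have hEv_pos : 0 < ellK v := ellK_pos (by nlinarith)
  -- mu u = pi / 6
  have hmu_u : mu u = Real.pi / 6 := by
    have hsqrt_v : Real.sqrt (1 - u^2) = v := by
      rw [huv_sq]
      exact Real.sqrt_sq hv_pos.le
    unfold mu
    rw [hsqrt_v, hT1, hT2]
    rw [div_eq_div_iff (mul_pos ha1_pos (mul_pos ha2_pos hEv_pos)).ne'
      (by norm_num : (6:ℝ) ≠ 0)]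
    linear_combination (-(Real.pi * ellK v)) * ha1a2
  -- mu (1/s) = pi/2
  have hmu_s : mu (1/s) = Real.pi / 2 := by
    have h1 : Real.sqrt (1 - (1/s)^2) = 1/s := by
      rw [show (1:ℝ) - (1/s)^2 = (1/s)^2 by
        rw [div_pow, one_pow, hs2]; norm_num]
      exact Real.sqrt_sq (by positivity)
    unfold mu
    rw [h1, mul_div_assoc, div_self hEs_pos.ne', mul_one]
  -- phi 3 (1/sqrt 2) = u
  have hphi : phi 3 (1/s) = u := by
    have hne0 : (1:ℝ)/s ≠ 0 := one_div_ne_zero hs0.ne'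
    have hne1 : (1:ℝ)/s ≠ 1 := by
      intro h
      rw [div_eq_one_iff_eq hs0.ne'] at h
      rw [← h] at hs2
      norm_num at hs2
    unfold phi
    rw [if_neg hne0, if_neg hne1]
    unfold muInv
    have harg : mu (1/s) / 3 = Real.pi / 6 := by
      rw [hmu_s]; ring
    rw [harg]
    have hmem : u ∈ Set.Ioo (0:ℝ) 1 := ⟨hu_pos, hu_lt⟩
    have hex : ∃ a ∈ Set.Ioo (0:ℝ) 1, mu a = Real.pi / 6 := ⟨u, hmem, hmu_u⟩
    have h1 := Function.invFunOn_eq (f := mu) hex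
    have h2 := Function.invFunOn_mem (f := mu) hex
    exact mu_strictAntiOn.injOn h2 hmem (h1.trans hmu_u.symm)
  rw [hphi, huv_sq, Real.sqrt_sq hv_pos.le]
  -- final arithmetic : sqrt u + sqrt v = 2^(1/4)
  have ht2lt2 : t^2 < 2 := by nlinarith
  have hprod : u * v = (s*(2-t^2)/2)^2 := by
    rw [hu_def, hv_def]
    linear_combination ((-3/4:ℝ) + (1/2:ℝ)*t^2) * hs2 + ((1/2:ℝ) + (-1/4:ℝ)*t^2) * ht4
  have hsqrtuv : Real.sqrt u * Real.sqrt v = s*(2-t^2)/2 := by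
    rw [← Real.sqrt_mul hu_pos.le, hprod]
    exact Real.sqrt_sq (by nlinarith)
  have hsum_sq : (Real.sqrt u + Real.sqrt v)^2 = s := by
    have e1 : (Real.sqrt u + Real.sqrt v)^2
        = u + v + 2*(Real.sqrt u * Real.sqrt v) := by
      rw [add_sq, Real.sq_sqrt hu_pos.le, Real.sq_sqrt hv_pos.le]
      ring
    rw [e1, hsqrtuv, hu_def, hv_def]
    ring
  have hfinal : Real.sqrt u + Real.sqrt v = Real.sqrt s := by
    rw [← hsum_sq]
    exact (Real.sqrt_sq (by positivity)).symm
  rw [hfinal, hs_def]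
  rw [show Real.sqrt (Real.sqrt 2) = ((2:ℝ) ^ ((1:ℝ)/2)) ^ ((1:ℝ)/2) by
    rw [← Real.sqrt_eq_rpow, ← Real.sqrt_eq_rpow]]
  rw [← Real.rpow_mul (by norm_num : (0:ℝ) ≤ 2)]
  norm_num
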